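/- arXiv:math0606783 — 3 statements merged into one kernel-verified Lean document; each statement's English description precedes it below -/
import Mathlib

section
/- Let ρ : [0,∞) → ℝ be a càdlàg function and let a : ℝ → ℝ be of class C¹ with bounded derivative. For x ∈ ℝ let t ↦ x_t(x) denote the unique continuous solution of x_t(x) = x + ∫₀ᵗ a(x_s(x) + ρ_s) ds. Then for every fixed t ≥ 0 the flow map x ↦ x_t(x) is differentiable on ℝ, and its derivative equals exp(∫₀ᵗ a'(x_s(x) + ρ_s) ds); equivalently, the derivative ẋ_t(x) satisfies ẋ_t(x) = 1 + ∫₀ᵗ a'(x_s(x) + ρ_s) ẋ_s(x) ds. -/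
open MeasureTheory Filter Set
open Topology intervalIntegral

/-- A real function is càdlàg on `[0,∞)`: right-continuous at every `t ≥ 0`
and with a left limit at every `t > 0`. -/
def CadlagOn (z : ℝ → ℝ) : Prop :=
  (∀ t : ℝ, 0 ≤ t → ContinuousWithinAt z (Set.Ici t) t) ∧
  (∀ t : ℝ, 0 < t → ∃ l : ℝ, Filter.Tendsto z (nhdsWithin t (Set.Iio t)) (nhds l))


lemma measurable_of_rightCont (w : ℝ → ℝ)
    (h : ∀ t : ℝ, ContinuousWithinAt w (Set.Ici t) t) : Measurable w := by
  have hfn : ∀ n : ℕ, Measurable (fun s : ℝ => w ((⌈s * 2 ^ n⌉ : ℤ) / 2 ^ n)) := by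
    intro n
    exact (Measurable.of_discrete (f := fun k : ℤ => w ((k : ℝ) / 2 ^ n))).comp
      (Int.measurable_ceil.comp (measurable_id.mul_const _))
  refine measurable_of_tendsto_metrizable hfn ?_
  rw [tendsto_pi_nhds]
  intro s
  have hpos : ∀ n : ℕ, (0:ℝ) < 2 ^ n := fun n => by positivity
  have hge : ∀ n : ℕ, s ≤ ((⌈s * 2 ^ n⌉ : ℤ) : ℝ) / 2 ^ n := by
    intro n
    rw [le_div_iff₀ (hpos n)]
    exact Int.le_ceil _
  have hlt : ∀ n : ℕ, ((⌈s * 2 ^ n⌉ : ℤ) : ℝ) / 2 ^ n ≤ s + 1 / 2 ^ n := by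
    intro n
    rw [div_le_iff₀ (hpos n), add_mul, one_div, inv_mul_cancel₀ (hpos n).ne']
    exact (Int.ceil_lt_add_one _).le
  have h1 : Tendsto (fun n : ℕ => ((⌈s * 2 ^ n⌉ : ℤ) : ℝ) / 2 ^ n) atTop (𝓝 s) := by
    refine tendsto_of_tendsto_of_tendsto_of_le_of_le tendsto_const_nhds ?_ hge hlt
    have : Tendsto (fun n : ℕ => (1:ℝ) / 2 ^ n) atTop (𝓝 0) := by
      simpa [one_div, Function.comp_def] using tendsto_inv_atTop_zero.comp
        (tendsto_pow_atTop_atTop_of_one_lt (by norm_num : (1:ℝ) < 2))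
    simpa using tendsto_const_nhds.add this
  have h2 : Tendsto (fun n : ℕ => ((⌈s * 2 ^ n⌉ : ℤ) : ℝ) / 2 ^ n) atTop (𝓝[Set.Ici s] s) :=
    tendsto_nhdsWithin_of_tendsto_nhds_of_eventually_within _ h1
      (Eventually.of_forall fun n => hge n)
  exact (h s).tendsto.comp h2

lemma cadlag_bddOn (z : ℝ → ℝ) (hz : CadlagOn z) (T : ℝ) :
    ∃ C : ℝ, ∀ s ∈ Set.Icc (0:ℝ) T, |z s| ≤ C := by
  have key : ∀ s : ℝ, ∃ C : ℝ, ∀ᶠ r in 𝓝 s, r ∈ Set.Ici (0:ℝ) → |z r| ≤ C := by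
    intro s
    rcases lt_or_ge s 0 with hs | hs
    · refine ⟨0, ?_⟩
      filter_upwards [Iio_mem_nhds hs] with r hr hr0
      exact absurd (lt_of_le_of_lt hr0 (Set.mem_Iio.1 hr)) (lt_irrefl 0)
    · have hr1 : ∀ᶠ r in 𝓝[Set.Ici s] s, |z r| ≤ |z s| + 1 := by
        have := (hz.1 s hs).tendsto
        have h2 : ∀ᶠ r in 𝓝[Set.Ici s] s, |z r - z s| < 1 := by
          have : ∀ᶠ r in 𝓝[Set.Ici s] s, z r ∈ Metric.ball (z s) 1 := this (Metric.ball_mem_nhds (z s) one_pos)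
          simpa [Metric.mem_ball, Real.dist_eq] using this
        filter_upwards [h2] with r hr
        calc |z r| ≤ |z r - z s| + |z s| := by
              simpa using abs_add_le (z r - z s) (z s)
          _ ≤ |z s| + 1 := by linarith [hr.le]
      rcases eq_or_lt_of_le hs with hs0 | hs0
      · refine ⟨|z s| + 1, ?_⟩
        rw [eventually_nhdsWithin_iff] at hr1
        filter_upwards [hr1] with r hr hr0
        exact hr (hs0 ▸ hr0)
      · obtain ⟨l, hl⟩ := hz.2 s hs0
        have hr2 : ∀ᶠ r in 𝓝[Set.Iio s] s, |z r| ≤ |l| + 1 := by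
          have h2 : ∀ᶠ r in 𝓝[Set.Iio s] s, |z r - l| < 1 := by
            have : ∀ᶠ r in 𝓝[Set.Iio s] s, z r ∈ Metric.ball l 1 := hl (Metric.ball_mem_nhds l one_pos)
            simpa [Metric.mem_ball, Real.dist_eq] using this
          filter_upwards [h2] with r hr
          calc |z r| ≤ |z r - l| + |l| := by simpa using abs_add_le (z r - l) l
            _ ≤ |l| + 1 := by linarith [hr.le]
        refine ⟨max (|z s| + 1) (|l| + 1), ?_⟩
        rw [eventually_nhdsWithin_iff] at hr1 hr2
        filter_upwards [hr1, hr2] with r h1 h2 _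
        rcases lt_or_ge r s with h | h
        · exact le_trans (h2 h) (le_max_right _ _)
        · exact le_trans (h1 h) (le_max_left _ _)
  choose C hC using key
  obtain ⟨t, -, ht⟩ := isCompact_Icc.elim_nhds_subcover
    (fun s => {r | r ∈ Set.Ici (0:ℝ) → |z r| ≤ C s}) (fun s _ => hC s)
  refine ⟨∑ s ∈ t, |C s|, fun r hr => ?_⟩
  obtain ⟨s, hst, hrs⟩ := Set.mem_iUnion₂.1 (ht hr)
  calc |z r| ≤ C s := hrs hr.1
    _ ≤ |C s| := le_abs_self _
    _ ≤ ∑ s ∈ t, |C s| := Finset.single_le_sum (f := fun i => |C i|) (fun i _ => abs_nonneg _) hst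

lemma gron (v : ℝ → ℝ) {T c K : ℝ} (hK : 0 < K) (hc : 0 ≤ c)
    (hv : ContinuousOn v (Set.Icc 0 T))
    (hnn : ∀ r ∈ Set.Icc (0:ℝ) T, 0 ≤ v r)
    (hineq : ∀ r ∈ Set.Icc (0:ℝ) T, v r ≤ c + K * ∫ s in (0:ℝ)..r, v s) :
    ∀ r ∈ Set.Icc (0:ℝ) T, v r ≤ c * Real.exp (K * r) := by
  rcases lt_or_ge T 0 with hT | hT
  · intro r hr; exact absurd (hr.1.trans hr.2) (not_le.2 hT)
  set ψ : ℝ → ℝ := fun r => ∫ s in (0:ℝ)..r, v s with hψdef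
  have hvi : ∀ r ∈ Set.Icc (0:ℝ) T, IntervalIntegrable v volume 0 r := fun r hr =>
    ContinuousOn.intervalIntegrable (by
      rw [Set.uIcc_of_le hr.1]
      exact hv.mono (Set.Icc_subset_Icc_right hr.2))
  have hψnn : ∀ r ∈ Set.Icc (0:ℝ) T, 0 ≤ ψ r := fun r hr =>
    intervalIntegral.integral_nonneg hr.1
      (fun s hs => hnn s ⟨hs.1, hs.2.trans hr.2⟩)
  have hψc : ContinuousOn ψ (Set.Icc 0 T) := by
    have h1 : ContinuousOn (fun r => ∫ s in Set.Ioc (0:ℝ) r, v s) (Set.Icc 0 T) :=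
      intervalIntegral.continuousOn_primitive (hv.integrableOn_Icc)
    exact h1.congr fun r hr => intervalIntegral.integral_of_le hr.1
  have hψ' : ∀ r ∈ Set.Ico (0:ℝ) T, HasDerivWithinAt ψ (v r) (Set.Ici r) r := by
    intro r hr
    have hmem : Set.Icc r T ∈ 𝓝[Set.Ioi r] r := by
      rw [mem_nhdsWithin_iff_exists_mem_nhds_inter]
      exact ⟨Set.Iio T, Iio_mem_nhds hr.2, by
        rintro x ⟨hx1, hx2⟩; exact ⟨le_of_lt hx2, le_of_lt hx1⟩⟩
    refine intervalIntegral.integral_hasDerivWithinAt_right (hvi r ⟨hr.1, hr.2.le⟩)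
      ⟨Set.Icc r T, hmem, ?_⟩ ?_
    · exact ((hv.mono (Set.Icc_subset_Icc_left hr.1)).aestronglyMeasurable measurableSet_Icc)
    · refine (hv.continuousWithinAt ⟨hr.1, hr.2.le⟩).mono_of_mem_nhdsWithin ?_
      rw [mem_nhdsWithin_iff_exists_mem_nhds_inter]
      exact ⟨Set.Iio T, Iio_mem_nhds hr.2, by
        rintro x ⟨hx1, hx2⟩; exact ⟨hr.1.trans (le_of_lt hx2), le_of_lt hx1⟩⟩
  have hb := norm_le_gronwallBound_of_norm_deriv_right_le (f := ψ) (f' := v)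
    (δ := 0) (K := K) (ε := c) (a := 0) (b := T) hψc hψ'
    (by simp [hψdef]) ?_
  · intro r hr
    have h1 := hb r hr
    rw [Real.norm_eq_abs, abs_of_nonneg (hψnn r hr), sub_zero,
      gronwallBound_of_K_ne_0 hK.ne'] at h1
    have h2 := hineq r hr
    have : c + K * ψ r ≤ c + K * (0 * Real.exp (K * r) + c / K * (Real.exp (K * r) - 1)) := by
      nlinarith [h1]
    calc v r ≤ c + K * ψ r := h2
      _ ≤ c + K * (0 * Real.exp (K * r) + c / K * (Real.exp (K * r) - 1)) := this
      _ = c * Real.exp (K * r) := by field_simp; ring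
  · intro r hr
    rw [Real.norm_eq_abs, Real.norm_eq_abs, abs_of_nonneg (hnn r ⟨hr.1, hr.2.le⟩),
      abs_of_nonneg (hψnn r ⟨hr.1, hr.2.le⟩)]
    linarith [hineq r ⟨hr.1, hr.2.le⟩]

lemma lipA {a : ℝ → ℝ} {M : ℝ} (ha : ContDiff ℝ 1 a) (hbd : ∀ y : ℝ, |deriv a y| ≤ M) :
    ∀ p q : ℝ, |a p - a q| ≤ M * |p - q| := by
  intro p q
  have := Convex.norm_image_sub_le_of_norm_deriv_le (f := a) (s := Set.univ)
    (fun x _ => (ha.differentiable one_ne_zero).differentiableAt)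
    (fun x _ => by simpa [Real.norm_eq_abs] using hbd x) convex_univ (Set.mem_univ q)
    (Set.mem_univ p)
  simpa [Real.norm_eq_abs] using this

lemma taylorMVT {a : ℝ → ℝ} (ha : ContDiff ℝ 1 a) {p q ε : ℝ}
    (h : ∀ ξ ∈ Set.uIcc q p, |deriv a ξ - deriv a q| ≤ ε) :
    |a p - a q - deriv a q * (p - q)| ≤ ε * |p - q| := by
  have hd : ∀ x : ℝ, HasDerivAt (fun z => a z - deriv a q * z) (deriv a x - deriv a q) x :=
    fun x => by
      have := ((ha.differentiable one_ne_zero).differentiableAt.hasDerivAt (f := a)).sub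
        ((hasDerivAt_id x).const_mul (deriv a q))
      simp at this; exact this
  have := Convex.norm_image_sub_le_of_norm_deriv_le (f := fun z => a z - deriv a q * z)
    (s := Set.uIcc q p)
    (fun x _ => (hd x).differentiableAt)
    (fun x hx => by
      rw [(hd x).deriv, Real.norm_eq_abs]; exact h x hx)
    (convex_uIcc q p) Set.left_mem_uIcc Set.right_mem_uIcc
  rw [Real.norm_eq_abs, Real.norm_eq_abs] at this
  calc |a p - a q - deriv a q * (p - q)|
      = |(a p - deriv a q * p) - (a q - deriv a q * q)| := by ring_nf
    _ ≤ ε * |p - q| := this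

lemma expLip {B p q : ℝ} (hp : p ≤ B) (hq : q ≤ B) :
    |Real.exp p - Real.exp q| ≤ Real.exp B * |p - q| := by
  have := Convex.norm_image_sub_le_of_norm_deriv_le (f := Real.exp) (s := Set.Iic B)
    (fun x _ => Real.differentiable_exp.differentiableAt)
    (fun x hx => by
      rw [Real.deriv_exp, Real.norm_eq_abs, abs_of_pos (Real.exp_pos x)]
      exact Real.exp_le_exp.2 hx) (convex_Iic B) hq hp
  simpa [Real.norm_eq_abs] using this

lemma expInt_cont (φ : ℝ → ℝ) (hφ : Continuous φ) (T : ℝ) :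
    Real.exp (∫ s in (0:ℝ)..T, φ s) =
      1 + ∫ s in (0:ℝ)..T, φ s * Real.exp (∫ u in (0:ℝ)..s, φ u) := by
  set Φ : ℝ → ℝ := fun r => ∫ u in (0:ℝ)..r, φ u with hΦdef
  have hΦ : ∀ r : ℝ, HasDerivAt Φ (φ r) r := fun r =>
    intervalIntegral.integral_hasDerivAt_right (hφ.intervalIntegrable 0 r)
      (hφ.stronglyMeasurableAtFilter _ _) hφ.continuousAt
  have hΦc : Continuous Φ := by
    apply continuous_iff_continuousAt.2 fun r => (hΦ r).continuousAt
  have hE : ∀ r : ℝ, HasDerivAt (fun z => Real.exp (Φ z)) (φ r * Real.exp (Φ r)) r := by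
    intro r
    simpa [mul_comm] using (hΦ r).exp
  have := intervalIntegral.integral_eq_sub_of_hasDerivAt (f := fun z => Real.exp (Φ z))
    (f' := fun r => φ r * Real.exp (Φ r)) (a := 0) (b := T)
    (fun r _ => hE r) ((hφ.mul (Real.continuous_exp.comp hΦc)).intervalIntegrable 0 T)
  have h0 : Φ 0 = 0 := intervalIntegral.integral_same
  simp only [hΦdef] at this h0
  simp only [this, h0, Real.exp_zero]
  ring

lemma expInt (g : ℝ → ℝ) {M T : ℝ} (hT : 0 ≤ T) (hM : 0 ≤ M)
    (hb : ∀ s, |g s| ≤ M)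
    (hmeas : AEStronglyMeasurable g (volume.restrict (Set.Ioc 0 T))) :
    Real.exp (∫ s in (0:ℝ)..T, g s) =
      1 + ∫ s in (0:ℝ)..T, g s * Real.exp (∫ u in (0:ℝ)..s, g u) := by
  have hgon : ∀ r ∈ Set.Icc (0:ℝ) T, IntegrableOn g (Set.Ioc 0 r) := by
    intro r hr
    refine Integrable.mono' (integrable_const M)
      (hmeas.mono_measure (Measure.restrict_mono (Set.Ioc_subset_Ioc_right hr.2) le_rfl)) ?_
    exact Eventually.of_forall fun s => by simpa [Real.norm_eq_abs] using hb s
  have hgint : ∀ r ∈ Set.Icc (0:ℝ) T, IntervalIntegrable g volume 0 r := by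
    intro r hr
    rw [intervalIntegrable_iff, Set.uIoc_of_le hr.1]
    exact hgon r hr
  set G : ℝ → ℝ := fun r => ∫ u in (0:ℝ)..r, g u with hGdef
  have hGb : ∀ r ∈ Set.Icc (0:ℝ) T, |G r| ≤ M * T := by
    intro r hr
    calc |G r| ≤ M * |r - 0| := by
          simpa [Real.norm_eq_abs] using
            intervalIntegral.norm_integral_le_of_norm_le_const
              (f := g) (a := 0) (b := r) (C := M)
              (fun s _ => by simpa [Real.norm_eq_abs] using hb s)
      _ ≤ M * T := by
          rw [sub_zero, abs_of_nonneg hr.1]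
          exact mul_le_mul_of_nonneg_left hr.2 hM
  have hGcont : ContinuousOn G (Set.Icc 0 T) := by
    have : LipschitzOnWith M.toNNReal G (Set.Icc 0 T) := by
      apply LipschitzOnWith.of_dist_le_mul
      intro s1 hs1 s2 hs2
      have hsub : G s1 - G s2 = ∫ u in s2..s1, g u :=
        intervalIntegral.integral_interval_sub_left (hgint s1 hs1) (hgint s2 hs2)
      rw [Real.dist_eq, Real.dist_eq, hsub]
      calc |∫ u in s2..s1, g u| ≤ M * |s1 - s2| := by
            have := intervalIntegral.norm_integral_le_of_norm_le_const
              (f := g) (a := s2) (b := s1) (C := M)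
              (fun s _ => by simpa [Real.norm_eq_abs] using hb s)
            simpa [Real.norm_eq_abs, abs_sub_comm] using this
        _ = ↑M.toNNReal * |s1 - s2| := by rw [Real.coe_toNNReal M hM]
    exact this.continuousOn
  have hexpGaesm : AEStronglyMeasurable (fun s => Real.exp (G s))
      (volume.restrict (Set.Ioc 0 T)) :=
    ((Real.continuous_exp.comp_continuousOn hGcont).aestronglyMeasurable
      measurableSet_Icc).mono_measure
      (Measure.restrict_mono Set.Ioc_subset_Icc_self le_rfl)
  have hf1int : IntegrableOn (fun s => g s * Real.exp (G s)) (Set.Ioc 0 T) := by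
    refine Integrable.mono' (integrable_const (M * Real.exp (M * T)))
      (hmeas.mul hexpGaesm) ?_
    rw [ae_restrict_iff' measurableSet_Ioc]
    refine Eventually.of_forall fun s hs => ?_
    have h1 : G s ≤ M * T := le_of_abs_le (hGb s ⟨hs.1.le, hs.2⟩)
    rw [Real.norm_eq_abs, abs_mul, abs_of_pos (Real.exp_pos _)]
    exact mul_le_mul (hb s) (Real.exp_le_exp.2 h1) (Real.exp_nonneg _) hM
  set A : ℝ := Real.exp (G T) with hAdef
  set B : ℝ := 1 + ∫ s in (0:ℝ)..T, g s * Real.exp (G s) with hBdef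
  set C : ℝ := Real.exp (M * T) * (2 + M * T) with hCdef
  have hCpos : 0 < C := by positivity
  have key : ∀ ε : ℝ, 0 < ε → |A - B| ≤ ε * C := by
    intro ε hε
    have hg1 : Integrable ((Set.Ioc (0:ℝ) T).indicator g) volume :=
      ((hgon T ⟨hT, le_rfl⟩).integrable_indicator measurableSet_Ioc)
    obtain ⟨gc, -, hgcL1, hgccont, hgcint⟩ :=
      hg1.exists_hasCompactSupport_integral_sub_le hε
    set gT : ℝ → ℝ := fun s => max (-M) (min M (gc s)) with hgTdef
    have hgTcont : Continuous gT := continuous_const.max (continuous_const.min hgccont)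
    have hgTb : ∀ s, |gT s| ≤ M := by
      intro s
      rw [abs_le]
      exact ⟨le_max_left _ _, max_le (neg_le_self hM) (min_le_left _ _)⟩
    have htrunc : ∀ s ∈ Set.Ioc (0:ℝ) T,
        |g s - gT s| ≤ |(Set.Ioc (0:ℝ) T).indicator g s - gc s| := by
      intro s hs
      have h1 : (Set.Ioc (0:ℝ) T).indicator g s = g s := Set.indicator_of_mem hs g
      rw [h1]
      have h2 : g s = max (-M) (min M (g s)) := by
        rcases abs_le.1 (hb s) with ⟨hl, hu⟩
        rw [min_eq_right hu, max_eq_right hl]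
      calc |g s - gT s| = |(max (-M) (min M (g s))) - (max (-M) (min M (gc s)))| := by
            rw [← h2]
        _ = |(max (min M (g s)) (-M)) - (max (min M (gc s)) (-M))| := by
            rw [max_comm, max_comm (-M)]
        _ ≤ |min M (g s) - min M (gc s)| := abs_max_sub_max_le_abs _ _ _
        _ ≤ max |M - M| |g s - gc s| := abs_min_sub_min_le_max _ _ _ _
        _ = |g s - gc s| := by simp
    have hdiffint : IntegrableOn (fun s => |g s - gT s|) (Set.Ioc 0 T) :=
      ((hgon T ⟨hT, le_rfl⟩).sub (hgTcont.integrableOn_Ioc)).abs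
    have hindint : IntegrableOn (fun s => |(Set.Ioc (0:ℝ) T).indicator g s - gc s|)
        (Set.Ioc 0 T) := ((hg1.sub hgcint).abs).integrableOn
    have hL1 : ∫ s in Set.Ioc (0:ℝ) T, |g s - gT s| ≤ ε := by
      calc ∫ s in Set.Ioc (0:ℝ) T, |g s - gT s|
          ≤ ∫ s in Set.Ioc (0:ℝ) T, |(Set.Ioc (0:ℝ) T).indicator g s - gc s| :=
            setIntegral_mono_on hdiffint hindint measurableSet_Ioc htrunc
        _ ≤ ∫ s, |(Set.Ioc (0:ℝ) T).indicator g s - gc s| :=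
            setIntegral_le_integral (hg1.sub hgcint).abs
              (Eventually.of_forall fun x => abs_nonneg _)
        _ ≤ ε := by simpa [Real.norm_eq_abs] using hgcL1
    set GT : ℝ → ℝ := fun r => ∫ u in (0:ℝ)..r, gT u with hGTdef
    have hGTb : ∀ r ∈ Set.Icc (0:ℝ) T, |GT r| ≤ M * T := by
      intro r hr
      calc |GT r| ≤ M * |r - 0| := by
            simpa [Real.norm_eq_abs] using
              intervalIntegral.norm_integral_le_of_norm_le_const
                (f := gT) (a := 0) (b := r) (C := M)
                (fun s _ => by simpa [Real.norm_eq_abs] using hgTb s)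
        _ ≤ M * T := by
            rw [sub_zero, abs_of_nonneg hr.1]
            exact mul_le_mul_of_nonneg_left hr.2 hM
    have hGd : ∀ r ∈ Set.Icc (0:ℝ) T, |G r - GT r| ≤ ε := by
      intro r hr
      have hsub : G r - GT r = ∫ s in (0:ℝ)..r, (g s - gT s) :=
        (intervalIntegral.integral_sub (hgint r hr) (hgTcont.intervalIntegrable 0 r)).symm
      rw [hsub, intervalIntegral.integral_of_le hr.1]
      calc |∫ s in Set.Ioc (0:ℝ) r, (g s - gT s)|
          ≤ ∫ s in Set.Ioc (0:ℝ) r, |g s - gT s| := by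
            simpa [Real.norm_eq_abs] using
              MeasureTheory.norm_integral_le_integral_norm (f := fun s => g s - gT s)
                (μ := volume.restrict (Set.Ioc 0 r))
        _ ≤ ∫ s in Set.Ioc (0:ℝ) T, |g s - gT s| :=
            setIntegral_mono_set hdiffint
              (Eventually.of_forall fun x => abs_nonneg _)
              (HasSubset.Subset.eventuallyLE (Set.Ioc_subset_Ioc_right hr.2))
        _ ≤ ε := hL1
    have hGTcont : Continuous GT := by
      apply continuous_iff_continuousAt.2 fun r =>
        (intervalIntegral.integral_hasDerivAt_right (hgTcont.intervalIntegrable 0 r)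
          (hgTcont.stronglyMeasurableAtFilter _ _) hgTcont.continuousAt).continuousAt
    have hf2int : IntegrableOn (fun s => gT s * Real.exp (GT s)) (Set.Ioc 0 T) :=
      (hgTcont.mul (Real.continuous_exp.comp hGTcont)).integrableOn_Ioc
    -- pointwise bound on the difference of integrands
    have hptw : ∀ s ∈ Set.Ioc (0:ℝ) T,
        |g s * Real.exp (G s) - gT s * Real.exp (GT s)| ≤
          Real.exp (M * T) * |g s - gT s| + M * (Real.exp (M * T) * ε) := by
      intro s hs
      have hsIcc : s ∈ Set.Icc (0:ℝ) T := ⟨hs.1.le, hs.2⟩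
      have h1 : G s ≤ M * T := le_of_abs_le (hGb s hsIcc)
      have h2 : GT s ≤ M * T := le_of_abs_le (hGTb s hsIcc)
      have hdecomp : g s * Real.exp (G s) - gT s * Real.exp (GT s) =
          (g s - gT s) * Real.exp (G s) + gT s * (Real.exp (G s) - Real.exp (GT s)) := by
        ring
      rw [hdecomp]
      calc |(g s - gT s) * Real.exp (G s) + gT s * (Real.exp (G s) - Real.exp (GT s))|
          ≤ |(g s - gT s) * Real.exp (G s)| + |gT s * (Real.exp (G s) - Real.exp (GT s))| :=
            abs_add_le _ _
        _ ≤ Real.exp (M * T) * |g s - gT s| + M * (Real.exp (M * T) * ε) := by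
            gcongr ?_ + ?_
            · rw [abs_mul, abs_of_pos (Real.exp_pos _), mul_comm]
              exact mul_le_mul_of_nonneg_right (Real.exp_le_exp.2 h1) (abs_nonneg _)
            · rw [abs_mul]
              exact mul_le_mul (hgTb s)
                ((expLip h1 h2).trans
                  (mul_le_mul_of_nonneg_left (hGd s hsIcc) (Real.exp_nonneg _)))
                (abs_nonneg _) hM
    have hBd : |(∫ s in (0:ℝ)..T, g s * Real.exp (G s)) -
        (∫ s in (0:ℝ)..T, gT s * Real.exp (GT s))| ≤
        Real.exp (M * T) * ε + M * (Real.exp (M * T) * ε) * T := by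
      rw [intervalIntegral.integral_of_le hT, intervalIntegral.integral_of_le hT,
        ← integral_sub hf1int hf2int]
      calc |∫ s in Set.Ioc (0:ℝ) T, (g s * Real.exp (G s) - gT s * Real.exp (GT s))|
          ≤ ∫ s in Set.Ioc (0:ℝ) T, |g s * Real.exp (G s) - gT s * Real.exp (GT s)| := by
            simpa [Real.norm_eq_abs] using
              MeasureTheory.norm_integral_le_integral_norm
                (f := fun s => g s * Real.exp (G s) - gT s * Real.exp (GT s))
                (μ := volume.restrict (Set.Ioc 0 T))
        _ ≤ ∫ s in Set.Ioc (0:ℝ) T,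
              (Real.exp (M * T) * |g s - gT s| + M * (Real.exp (M * T) * ε)) := by
            refine setIntegral_mono_on ((hf1int.sub hf2int).abs) ?_ measurableSet_Ioc hptw
            exact (hdiffint.const_mul _).add (integrableOn_const
              (by simp [Real.volume_Ioc]))
        _ = Real.exp (M * T) * (∫ s in Set.Ioc (0:ℝ) T, |g s - gT s|) +
              (M * (Real.exp (M * T) * ε)) * T := by
            rw [integral_add (hdiffint.const_mul _) (integrableOn_const
              (by simp [Real.volume_Ioc]))]
            rw [MeasureTheory.integral_const_mul, setIntegral_const, measureReal_def, Real.volume_Ioc,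
              sub_zero, ENNReal.toReal_ofReal hT, smul_eq_mul]
            ring
        _ ≤ Real.exp (M * T) * ε + M * (Real.exp (M * T) * ε) * T := by
            have := mul_le_mul_of_nonneg_left hL1 (Real.exp_nonneg (M * T))
            linarith
    have hid : Real.exp (GT T) = 1 + ∫ s in (0:ℝ)..T, gT s * Real.exp (GT s) :=
      expInt_cont gT hgTcont T
    have hAc : |Real.exp (G T) - Real.exp (GT T)| ≤ Real.exp (M * T) * ε :=
      (expLip (le_of_abs_le (hGb T ⟨hT, le_rfl⟩)) (le_of_abs_le (hGTb T ⟨hT, le_rfl⟩))).trans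
        (mul_le_mul_of_nonneg_left (hGd T ⟨hT, le_rfl⟩) (Real.exp_nonneg _))
    have hsplit : A - B = (Real.exp (G T) - Real.exp (GT T)) +
        ((∫ s in (0:ℝ)..T, gT s * Real.exp (GT s)) -
          (∫ s in (0:ℝ)..T, g s * Real.exp (G s))) := by
      rw [hAdef, hBdef, hid]; ring
    calc |A - B| ≤ |Real.exp (G T) - Real.exp (GT T)| +
          |(∫ s in (0:ℝ)..T, gT s * Real.exp (GT s)) -
            (∫ s in (0:ℝ)..T, g s * Real.exp (G s))| := by
          rw [hsplit]; exact abs_add_le _ _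
      _ ≤ Real.exp (M * T) * ε + (Real.exp (M * T) * ε + M * (Real.exp (M * T) * ε) * T) := by
          gcongr
          rw [abs_sub_comm]
          exact hBd
      _ = ε * C := by rw [hCdef]; ring
  have habs : |A - B| ≤ 0 := by
    refine le_of_forall_pos_le_add fun η hη => ?_
    have := key (η / C) (div_pos hη hCpos)
    rw [div_mul_cancel₀ _ hCpos.ne'] at this
    linarith
  exact eq_of_abs_sub_nonpos habs

/-- The flow `x ↦ x_t(x)` of the equation `x_t(x) = x + ∫₀ᵗ a (x_s(x) + ρ_s) ds`
is differentiable in the initial condition, with derivative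
`exp (∫₀ᵗ a' (x_s(x) + ρ_s) ds)`; equivalently the derivative `u_t = ẋ_t(x)`
satisfies `u_t = 1 + ∫₀ᵗ a' (x_s(x) + ρ_s) u_s ds`. -/
theorem flow_differentiable
    (ρ a : ℝ → ℝ) (hρ : CadlagOn ρ)
    (ha : ContDiff ℝ 1 a) (hbd : ∃ M : ℝ, ∀ y : ℝ, |deriv a y| ≤ M)
    (F : ℝ → ℝ → ℝ)
    (hF : ∀ x : ℝ, ContinuousOn (F x) (Set.Ici 0) ∧
      ∀ t : ℝ, 0 ≤ t → F x t = x + ∫ s in (0:ℝ)..t, a (F x s + ρ s)) :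
    ∀ t : ℝ, 0 ≤ t → ∀ x : ℝ,
      HasDerivAt (fun y : ℝ => F y t)
        (Real.exp (∫ s in (0:ℝ)..t, deriv a (F x s + ρ s))) x ∧
      Real.exp (∫ s in (0:ℝ)..t, deriv a (F x s + ρ s)) =
        1 + ∫ s in (0:ℝ)..t,
              deriv a (F x s + ρ s) *
                Real.exp (∫ u in (0:ℝ)..s, deriv a (F x u + ρ u)) := by
  obtain ⟨M, hM⟩ := hbd
  have hMnn : 0 ≤ M := le_trans (abs_nonneg _) (hM 0)
  set K : ℝ := M + 1 with hKdef
  have hK : 0 < K := by rw [hKdef]; linarith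
  have hlip : ∀ p q : ℝ, |a p - a q| ≤ M * |p - q| := lipA ha hM
  have hacont : Continuous a := ha.continuous
  have hdacont : Continuous (deriv a) := ha.continuous_deriv le_rfl
  have hFcont : ∀ y : ℝ, ∀ T : ℝ, ContinuousOn (F y) (Set.Icc 0 T) :=
    fun y T => (hF y).1.mono fun s hs => hs.1
  -- measurability of ρ
  set w : ℝ → ℝ := fun s => ρ (max s 0) with hwdef
  have hwright : ∀ t : ℝ, ContinuousWithinAt w (Set.Ici t) t := by
    intro t
    rcases lt_or_ge t 0 with h | h
    · have hev : (fun _ : ℝ => w t) =ᶠ[𝓝[Set.Ici t] t] w := by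
        refine Filter.eventuallyEq_iff_exists_mem.2 ⟨Set.Iio 0, ?_, fun s hs => ?_⟩
        · exact mem_nhdsWithin_of_mem_nhds (Iio_mem_nhds h)
        · simp only [hwdef]
          rw [max_eq_right (le_of_lt h), max_eq_right (le_of_lt hs)]
      exact Filter.Tendsto.congr' hev tendsto_const_nhds
    · refine (hρ.1 t h).congr (fun s hs => ?_) ?_
      · simp only [hwdef]; rw [max_eq_left (h.trans hs)]
      · simp only [hwdef]; rw [max_eq_left h]
  have hwmeas : Measurable w := measurable_of_rightCont w hwright
  have hρaesm : ∀ r : ℝ, AEStronglyMeasurable ρ (volume.restrict (Set.Ioc 0 r)) := by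
    intro r
    refine (hwmeas.aestronglyMeasurable.restrict).congr ?_
    rw [Filter.EventuallyEq, ae_restrict_iff' measurableSet_Ioc]
    refine Eventually.of_forall fun s hs => ?_
    simp only [hwdef]; rw [max_eq_left hs.1.le]
  have hFaesm : ∀ y r : ℝ, AEStronglyMeasurable (fun s => F y s + ρ s)
      (volume.restrict (Set.Ioc 0 r)) := by
    intro y r
    refine AEStronglyMeasurable.add ?_ (hρaesm r)
    exact ((hFcont y r).aestronglyMeasurable measurableSet_Icc).mono_measure
      (Measure.restrict_mono Set.Ioc_subset_Icc_self le_rfl)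
  have haint : ∀ y r : ℝ, 0 ≤ r →
      IntervalIntegrable (fun s => a (F y s + ρ s)) volume 0 r := by
    intro y r hr
    obtain ⟨CF, hCF⟩ := isCompact_Icc.exists_bound_of_continuousOn (hFcont y r)
    obtain ⟨Cρ, hCρ⟩ := cadlag_bddOn ρ hρ r
    rw [intervalIntegrable_iff, Set.uIoc_of_le hr]
    refine Integrable.mono' (integrable_const (|a 0| + M * (|CF| + |Cρ|)))
      (hacont.comp_aestronglyMeasurable (hFaesm y r)) ?_
    rw [ae_restrict_iff' measurableSet_Ioc]
    refine Eventually.of_forall fun s hs => ?_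
    have hsIcc : s ∈ Set.Icc (0:ℝ) r := ⟨hs.1.le, hs.2⟩
    have h1 : |F y s + ρ s| ≤ |CF| + |Cρ| := by
      calc |F y s + ρ s| ≤ |F y s| + |ρ s| := abs_add_le _ _
        _ ≤ |CF| + |Cρ| := add_le_add
            (le_trans (by simpa [Real.norm_eq_abs] using hCF s hsIcc) (le_abs_self CF))
            (le_trans (hCρ s hsIcc) (le_abs_self Cρ))
    have h2 : |a (F y s + ρ s)| ≤ |a 0| + M * |F y s + ρ s| := by
      have h3 := hlip (F y s + ρ s) 0
      rw [sub_zero] at h3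
      calc |a (F y s + ρ s)| = |(a (F y s + ρ s) - a 0) + a 0| := by ring_nf
        _ ≤ |a (F y s + ρ s) - a 0| + |a 0| := abs_add_le _ _
        _ ≤ |a 0| + M * |F y s + ρ s| := by linarith
    rw [Real.norm_eq_abs]
    calc |a (F y s + ρ s)| ≤ |a 0| + M * |F y s + ρ s| := h2
      _ ≤ |a 0| + M * (|CF| + |Cρ|) := by nlinarith [abs_nonneg (F y s + ρ s)]
  -- fix t and x
  intro t ht x
  set g : ℝ → ℝ := fun s => deriv a (F x s + ρ s) with hgdef
  have hgb : ∀ s, |g s| ≤ M := fun s => hM _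
  have hgaesm : ∀ r : ℝ, AEStronglyMeasurable g (volume.restrict (Set.Ioc 0 r)) :=
    fun r => hdacont.comp_aestronglyMeasurable (hFaesm x r)
  have hgint : ∀ r : ℝ, 0 ≤ r → IntervalIntegrable g volume 0 r := by
    intro r hr
    rw [intervalIntegrable_iff, Set.uIoc_of_le hr]
    exact Integrable.mono' (integrable_const M) (hgaesm r)
      (Eventually.of_forall fun s => by simpa [Real.norm_eq_abs] using hgb s)
  have hid : ∀ r : ℝ, 0 ≤ r → Real.exp (∫ s in (0:ℝ)..r, g s) =
      1 + ∫ s in (0:ℝ)..r, g s * Real.exp (∫ u in (0:ℝ)..s, g u) :=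
    fun r hr => expInt g hr hMnn hgb (hgaesm r)
  refine ⟨?_, hid t ht⟩
  -- notation for the inner exponential
  set u : ℝ → ℝ := fun r => Real.exp (∫ s in (0:ℝ)..r, g s) with hudef
  have hGb : ∀ r ∈ Set.Icc (0:ℝ) t, |∫ s in (0:ℝ)..r, g s| ≤ M * t := by
    intro r hr
    calc |∫ s in (0:ℝ)..r, g s| ≤ M * |r - 0| := by
          simpa [Real.norm_eq_abs] using
            intervalIntegral.norm_integral_le_of_norm_le_const
              (f := g) (a := 0) (b := r) (C := M)
              (fun s _ => by simpa [Real.norm_eq_abs] using hgb s)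
      _ ≤ M * t := by
          rw [sub_zero, abs_of_nonneg hr.1]
          exact mul_le_mul_of_nonneg_left hr.2 hMnn
  have hub : ∀ r ∈ Set.Icc (0:ℝ) t, u r ≤ Real.exp (K * t) := by
    intro r hr
    apply Real.exp_le_exp.2
    calc (∫ s in (0:ℝ)..r, g s) ≤ M * t := le_of_abs_le (hGb r hr)
      _ ≤ K * t := mul_le_mul_of_nonneg_right (by rw [hKdef]; linarith) ht
  have hGcont : ContinuousOn (fun r => ∫ s in (0:ℝ)..r, g s) (Set.Icc 0 t) := by
    have hL : LipschitzOnWith M.toNNReal (fun r => ∫ s in (0:ℝ)..r, g s) (Set.Icc 0 t) := by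
      apply LipschitzOnWith.of_dist_le_mul
      intro s1 hs1 s2 hs2
      have hsub : (∫ s in (0:ℝ)..s1, g s) - ∫ s in (0:ℝ)..s2, g s = ∫ s in s2..s1, g s :=
        intervalIntegral.integral_interval_sub_left (hgint s1 hs1.1) (hgint s2 hs2.1)
      rw [Real.dist_eq, Real.dist_eq, hsub]
      calc |∫ s in s2..s1, g s| ≤ M * |s1 - s2| := by
            have := intervalIntegral.norm_integral_le_of_norm_le_const
              (f := g) (a := s2) (b := s1) (C := M)
              (fun s _ => by simpa [Real.norm_eq_abs] using hgb s)
            simpa [Real.norm_eq_abs, abs_sub_comm] using this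
        _ = ↑M.toNNReal * |s1 - s2| := by rw [Real.coe_toNNReal M hMnn]
    exact hL.continuousOn
  have hucont : ContinuousOn u (Set.Icc 0 t) := Real.continuous_exp.comp_continuousOn hGcont
  -- difference equation and first Gronwall estimate
  have hdiffeq : ∀ y r : ℝ, 0 ≤ r → F y r - F x r =
      (y - x) + ∫ s in (0:ℝ)..r, (a (F y s + ρ s) - a (F x s + ρ s)) := by
    intro y r hr
    rw [intervalIntegral.integral_sub (haint y r hr) (haint x r hr),
      (hF y).2 r hr, (hF x).2 r hr]
    ring
  have hgrow : ∀ y : ℝ, ∀ r ∈ Set.Icc (0:ℝ) t,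
      |F y r - F x r| ≤ |y - x| * Real.exp (K * r) := by
    intro y
    refine gron (fun r => |F y r - F x r|) hK (abs_nonneg _)
      (((hFcont y t).sub (hFcont x t)).abs) (fun r _ => abs_nonneg _) ?_
    intro r hr
    have hKvint : IntervalIntegrable (fun s => K * |F y s - F x s|) volume 0 r := by
      apply ContinuousOn.intervalIntegrable
      rw [Set.uIcc_of_le hr.1]
      exact continuousOn_const.mul
        ((((hFcont y t).sub (hFcont x t)).abs).mono (Set.Icc_subset_Icc_right hr.2))
    calc |F y r - F x r|
        = |(y - x) + ∫ s in (0:ℝ)..r, (a (F y s + ρ s) - a (F x s + ρ s))| := by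
          rw [← hdiffeq y r hr.1]
      _ ≤ |y - x| + |∫ s in (0:ℝ)..r, (a (F y s + ρ s) - a (F x s + ρ s))| := abs_add_le _ _
      _ ≤ |y - x| + ∫ s in (0:ℝ)..r, |a (F y s + ρ s) - a (F x s + ρ s)| := by
          refine add_le_add_right ?_ _
          simpa [Real.norm_eq_abs] using
            intervalIntegral.norm_integral_le_integral_norm
              (f := fun s => a (F y s + ρ s) - a (F x s + ρ s)) (a := 0) (b := r) hr.1
      _ ≤ |y - x| + ∫ s in (0:ℝ)..r, K * |F y s - F x s| := by
          refine add_le_add_right ?_ _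
          refine intervalIntegral.integral_mono_on hr.1
            (((haint y r hr.1).sub (haint x r hr.1)).abs) hKvint ?_
          intro s _
          have h1 : F y s + ρ s - (F x s + ρ s) = F y s - F x s := by ring
          calc |a (F y s + ρ s) - a (F x s + ρ s)| ≤ M * |F y s - F x s| := by
                have := hlip (F y s + ρ s) (F x s + ρ s)
                rwa [h1] at this
            _ ≤ K * |F y s - F x s| :=
                mul_le_mul_of_nonneg_right (by rw [hKdef]; linarith) (abs_nonneg _)
      _ = |y - x| + K * ∫ s in (0:ℝ)..r, |F y s - F x s| := by
          rw [intervalIntegral.integral_const_mul]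
  -- uniform continuity setup
  obtain ⟨CF, hCF⟩ := isCompact_Icc.exists_bound_of_continuousOn (hFcont x t)
  obtain ⟨Cρ, hCρ⟩ := cadlag_bddOn ρ hρ t
  set R : ℝ := |CF| + Real.exp (K * t) + |Cρ| with hRdef
  have hmemR : ∀ y : ℝ, |y - x| ≤ 1 → ∀ s ∈ Set.Icc (0:ℝ) t,
      F y s + ρ s ∈ Set.Icc (-R) R := by
    intro y hy s hs
    have h1 : |F y s - F x s| ≤ Real.exp (K * t) := by
      calc |F y s - F x s| ≤ |y - x| * Real.exp (K * s) := hgrow y s hs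
        _ ≤ 1 * Real.exp (K * t) := by
            apply mul_le_mul hy (Real.exp_le_exp.2 (mul_le_mul_of_nonneg_left hs.2 hK.le))
              (Real.exp_nonneg _) one_pos.le
        _ = Real.exp (K * t) := one_mul _
    have h2 : |F x s| ≤ |CF| :=
      le_trans (by simpa [Real.norm_eq_abs] using hCF s hs) (le_abs_self CF)
    have h3 : |ρ s| ≤ |Cρ| := le_trans (hCρ s hs) (le_abs_self Cρ)
    have h4 : |F y s + ρ s| ≤ R := by
      calc |F y s + ρ s| = |(F y s - F x s) + F x s + ρ s| := by ring_nf
        _ ≤ |(F y s - F x s) + F x s| + |ρ s| := abs_add_le _ _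
        _ ≤ |F y s - F x s| + |F x s| + |ρ s| := by
            have := abs_add_le (F y s - F x s) (F x s); linarith
        _ ≤ R := by rw [hRdef]; linarith
    rcases abs_le.1 h4 with ⟨hl, hu⟩
    exact ⟨hl, hu⟩
  have huc := isCompact_Icc.uniformContinuousOn_of_continuous (s := Set.Icc (-R) R)
    hdacont.continuousOn
  rw [Metric.uniformContinuousOn_iff] at huc
  -- the little-o estimate
  rw [hasDerivAt_iff_isLittleO, Asymptotics.isLittleO_iff]
  intro c hc
  set C' : ℝ := t * Real.exp (K * t) * Real.exp (K * t) + 1 with hC'def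
  have hC'pos : 0 < C' := by positivity
  have hC'one : 1 ≤ C' := by
    have h9 : 0 ≤ t * Real.exp (K * t) * Real.exp (K * t) := by positivity
    rw [hC'def]; linarith
  set ε : ℝ := c / C' with hεdef
  have hε : 0 < ε := div_pos hc hC'pos
  obtain ⟨δ, hδ, hδuc⟩ := huc ε hε
  rw [Metric.eventually_nhds_iff]
  refine ⟨min 1 (δ / Real.exp (K * t)), lt_min one_pos (div_pos hδ (Real.exp_pos _)),
    fun y hy => ?_⟩
  rw [Real.dist_eq] at hy
  have hyx1 : |y - x| ≤ 1 := le_of_lt (lt_of_lt_of_le hy (min_le_left _ _))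
  have hyδ : |y - x| * Real.exp (K * t) < δ := by
    have := lt_of_lt_of_le hy (min_le_right _ _)
    rwa [lt_div_iff₀ (Real.exp_pos _)] at this
  have hFd : ∀ s ∈ Set.Icc (0:ℝ) t, |F y s - F x s| ≤ |y - x| * Real.exp (K * t) := by
    intro s hs
    calc |F y s - F x s| ≤ |y - x| * Real.exp (K * s) := hgrow y s hs
      _ ≤ |y - x| * Real.exp (K * t) := mul_le_mul_of_nonneg_left
          (Real.exp_le_exp.2 (mul_le_mul_of_nonneg_left hs.2 hK.le)) (abs_nonneg _)
  -- the remainder function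
  have hRycont : ContinuousOn (fun r => F y r - F x r - (y - x) * u r) (Set.Icc 0 t) :=
    (((hFcont y t).sub (hFcont x t)).sub (continuousOn_const.mul hucont))
  obtain ⟨CR, hCR⟩ := isCompact_Icc.exists_bound_of_continuousOn hRycont
  -- integrability of the pieces
  have hgmulint : ∀ (v : ℝ → ℝ) (Cv : ℝ), ContinuousOn v (Set.Icc 0 t) →
      (∀ s ∈ Set.Icc (0:ℝ) t, |v s| ≤ Cv) →
      ∀ r ∈ Set.Icc (0:ℝ) t, IntervalIntegrable (fun s => g s * v s) volume 0 r := by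
    intro v Cv hvcont hvb r hr
    rw [intervalIntegrable_iff, Set.uIoc_of_le hr.1]
    have hvaesm : AEStronglyMeasurable v (volume.restrict (Set.Ioc 0 r)) :=
      ((hvcont.mono (Set.Icc_subset_Icc_right hr.2)).aestronglyMeasurable
        measurableSet_Icc).mono_measure
        (Measure.restrict_mono Set.Ioc_subset_Icc_self le_rfl)
    refine Integrable.mono' (integrable_const (M * |Cv|))
      (((hgaesm r).mono_measure (le_refl _)).mul hvaesm) ?_
    rw [ae_restrict_iff' measurableSet_Ioc]
    refine Eventually.of_forall fun s hs => ?_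
    have hsIcc : s ∈ Set.Icc (0:ℝ) t := ⟨hs.1.le, hs.2.trans hr.2⟩
    rw [Real.norm_eq_abs, abs_mul]
    exact mul_le_mul (hgb s) (le_trans (hvb s hsIcc) (le_abs_self Cv)) (abs_nonneg _) hMnn
  have hq2int : ∀ r ∈ Set.Icc (0:ℝ) t,
      IntervalIntegrable (fun s => g s * (F y s - F x s - (y - x) * u s)) volume 0 r :=
    hgmulint _ CR hRycont (fun s hs => by simpa [Real.norm_eq_abs] using hCR s hs)
  have hgFint : ∀ r ∈ Set.Icc (0:ℝ) t,
      IntervalIntegrable (fun s => g s * (F y s - F x s)) volume 0 r := by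
    obtain ⟨CD, hCD⟩ := isCompact_Icc.exists_bound_of_continuousOn
      ((hFcont y t).sub (hFcont x t))
    exact hgmulint _ CD ((hFcont y t).sub (hFcont x t))
      (fun s hs => by simpa [Real.norm_eq_abs] using hCD s hs)
  have hguint : ∀ r ∈ Set.Icc (0:ℝ) t,
      IntervalIntegrable (fun s => (y - x) * (g s * u s)) volume 0 r := by
    intro r hr
    exact ((hgmulint u (Real.exp (K * t)) hucont (fun s hs => by
      rw [abs_of_pos (Real.exp_pos _)]; exact hub s hs) r hr).const_mul (y - x))
  have hq1int : ∀ r ∈ Set.Icc (0:ℝ) t,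
      IntervalIntegrable (fun s => a (F y s + ρ s) - a (F x s + ρ s) -
        g s * (F y s - F x s)) volume 0 r :=
    fun r hr => ((haint y r hr.1).sub (haint x r hr.1)).sub (hgFint r hr)
  -- the remainder equation
  have hReq : ∀ r ∈ Set.Icc (0:ℝ) t, F y r - F x r - (y - x) * u r =
      (∫ s in (0:ℝ)..r, (a (F y s + ρ s) - a (F x s + ρ s) - g s * (F y s - F x s))) +
      ∫ s in (0:ℝ)..r, g s * (F y s - F x s - (y - x) * u s) := by
    intro r hr
    have e1 := hdiffeq y r hr.1
    have e2 : (y - x) * u r = (y - x) + ∫ s in (0:ℝ)..r, (y - x) * (g s * u s) := by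
      rw [intervalIntegral.integral_const_mul]
      have h2 := hid r hr.1
      rw [hudef]
      show (y - x) * Real.exp (∫ s in (0:ℝ)..r, g s) = _
      rw [h2]
      ring
    rw [← intervalIntegral.integral_add (hq1int r hr) (hq2int r hr)]
    have e3 : F y r - F x r - (y - x) * u r =
        (∫ s in (0:ℝ)..r, (a (F y s + ρ s) - a (F x s + ρ s))) -
        ∫ s in (0:ℝ)..r, (y - x) * (g s * u s) := by
      rw [e1, e2]; ring
    rw [e3, ← intervalIntegral.integral_sub
      (((haint y r hr.1).sub (haint x r hr.1))) (hguint r hr)]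
    apply intervalIntegral.integral_congr
    intro s _
    ring
  -- pointwise bound on q1
  have hq1bd : ∀ s ∈ Set.Icc (0:ℝ) t,
      |a (F y s + ρ s) - a (F x s + ρ s) - g s * (F y s - F x s)| ≤
        ε * (|y - x| * Real.exp (K * t)) := by
    intro s hs
    have hpm : F y s + ρ s ∈ Set.Icc (-R) R := hmemR y hyx1 s hs
    have hqm : F x s + ρ s ∈ Set.Icc (-R) R := hmemR x (by simp) s hs
    have hpq : F y s + ρ s - (F x s + ρ s) = F y s - F x s := by ring
    have hbound : ∀ ξ ∈ Set.uIcc (F x s + ρ s) (F y s + ρ s),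
        |deriv a ξ - deriv a (F x s + ρ s)| ≤ ε := by
      intro ξ hξ
      have hξm : ξ ∈ Set.Icc (-R) R := Set.uIcc_subset_Icc hqm hpm hξ
      have hξq : |ξ - (F x s + ρ s)| ≤ |F y s + ρ s - (F x s + ρ s)| := by
        rcases Set.mem_uIcc.1 hξ with ⟨h1, h2⟩ | ⟨h1, h2⟩
        · rw [abs_of_nonneg (by linarith), abs_of_nonneg (by linarith)]; linarith
        · rw [abs_of_nonpos (by linarith), abs_of_nonpos (by linarith)]; linarith
      have hlt : dist ξ (F x s + ρ s) < δ := by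
        rw [Real.dist_eq]
        calc |ξ - (F x s + ρ s)| ≤ |F y s + ρ s - (F x s + ρ s)| := hξq
          _ = |F y s - F x s| := by rw [hpq]
          _ ≤ |y - x| * Real.exp (K * t) := hFd s hs
          _ < δ := hyδ
      have := hδuc ξ hξm (F x s + ρ s) hqm hlt
      rw [Real.dist_eq] at this
      exact this.le
    have hTay := taylorMVT ha (p := F y s + ρ s) (q := F x s + ρ s) (ε := ε) hbound
    rw [hpq] at hTay
    calc |a (F y s + ρ s) - a (F x s + ρ s) - g s * (F y s - F x s)| ≤
          ε * |F y s - F x s| := hTay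
      _ ≤ ε * (|y - x| * Real.exp (K * t)) :=
          mul_le_mul_of_nonneg_left (hFd s hs) hε.le
  -- second Gronwall
  have hgron2 : ∀ r ∈ Set.Icc (0:ℝ) t, |F y r - F x r - (y - x) * u r| ≤
      (ε * (|y - x| * Real.exp (K * t)) * t) * Real.exp (K * r) := by
    refine gron _ hK (by positivity) hRycont.abs (fun r _ => abs_nonneg _) ?_
    intro r hr
    have hKRyint : IntervalIntegrable
        (fun s => K * |F y s - F x s - (y - x) * u s|) volume 0 r := by
      apply ContinuousOn.intervalIntegrable
      rw [Set.uIcc_of_le hr.1]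
      exact continuousOn_const.mul (hRycont.abs.mono (Set.Icc_subset_Icc_right hr.2))
    calc |F y r - F x r - (y - x) * u r|
        = |(∫ s in (0:ℝ)..r, (a (F y s + ρ s) - a (F x s + ρ s) - g s * (F y s - F x s))) +
            ∫ s in (0:ℝ)..r, g s * (F y s - F x s - (y - x) * u s)| := by
          rw [← hReq r hr]
      _ ≤ |∫ s in (0:ℝ)..r, (a (F y s + ρ s) - a (F x s + ρ s) - g s * (F y s - F x s))| +
            |∫ s in (0:ℝ)..r, g s * (F y s - F x s - (y - x) * u s)| := abs_add_le _ _
      _ ≤ ε * (|y - x| * Real.exp (K * t)) * t +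
            K * ∫ s in (0:ℝ)..r, |F y s - F x s - (y - x) * u s| := by
          gcongr ?_ + ?_
          · calc |∫ s in (0:ℝ)..r, (a (F y s + ρ s) - a (F x s + ρ s) -
                g s * (F y s - F x s))| ≤ ε * (|y - x| * Real.exp (K * t)) * |r| := by
                  have hnb := intervalIntegral.norm_integral_le_of_norm_le_const
                      (C := ε * (|y - x| * Real.exp (K * t)))
                      (f := fun s => a (F y s + ρ s) - a (F x s + ρ s) -
                        g s * (F y s - F x s)) (a := 0) (b := r)
                      (fun s hs => by
                        rw [Real.norm_eq_abs]
                        refine hq1bd s ?_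
                        rw [Set.uIoc_of_le hr.1] at hs
                        exact ⟨hs.1.le, hs.2.trans hr.2⟩)
                  rw [Real.norm_eq_abs, sub_zero] at hnb
                  exact hnb
              _ ≤ ε * (|y - x| * Real.exp (K * t)) * t := by
                  rw [abs_of_nonneg hr.1]
                  exact mul_le_mul_of_nonneg_left hr.2 (by positivity)
          · calc |∫ s in (0:ℝ)..r, g s * (F y s - F x s - (y - x) * u s)|
                ≤ ∫ s in (0:ℝ)..r, |g s * (F y s - F x s - (y - x) * u s)| :=
                  intervalIntegral.abs_integral_le_integral_abs hr.1
              _ ≤ ∫ s in (0:ℝ)..r, K * |F y s - F x s - (y - x) * u s| := by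
                  refine intervalIntegral.integral_mono_on hr.1
                    ((hq2int r hr).abs) hKRyint ?_
                  intro s _
                  rw [abs_mul]
                  exact mul_le_mul (le_trans (hgb s) (by rw [hKdef]; linarith))
                    le_rfl (abs_nonneg _) hK.le
              _ = K * ∫ s in (0:ℝ)..r, |F y s - F x s - (y - x) * u s| := by
                  rw [intervalIntegral.integral_const_mul]
  -- conclude
  have hfinal := hgron2 t ⟨ht, le_rfl⟩
  rw [Real.norm_eq_abs, Real.norm_eq_abs, smul_eq_mul]
  calc |F y t - F x t - (y - x) * u t| ≤
        (ε * (|y - x| * Real.exp (K * t)) * t) * Real.exp (K * t) := hfinal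
    _ = ε * (C' - 1) * |y - x| := by rw [hC'def]; ring
    _ ≤ c * |y - x| := by
        refine mul_le_mul_of_nonneg_right ?_ (abs_nonneg _)
        rw [hεdef]
        rw [div_mul_eq_mul_div, div_le_iff₀ hC'pos]
        nlinarith
end

section
/- In the jump-time perturbed setting, there is a constant C, depending only on the supremum norms ‖a‖_∞ and ‖a'‖_∞, such that |G(T) − G(T')| ≤ C·|T − T'| for all T, T' ∈ (0,1]; i.e., the map T ↦ Y₁(T) is Lipschitz on (0,1]. -/
open MeasureTheory Filter Set

lemma meas_comp_floor (g : ℝ → ℝ) (n : ℕ) :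
    Measurable (fun s : ℝ => g (((⌊s * ((n : ℝ) + 1)⌋ : ℝ) + 1) / ((n : ℝ) + 1))) := by
  have h1 : Measurable (fun s : ℝ => (⌊s * ((n : ℝ) + 1)⌋ : ℤ)) :=
    (measurable_id.mul_const _).floor
  exact (measurable_from_top (f := fun k : ℤ => g (((k : ℝ) + 1) / ((n : ℝ) + 1)))).comp h1

lemma measurable_of_rightCont_s3 {w : ℝ → ℝ}
    (hw : ∀ s : ℝ, ContinuousWithinAt w (Set.Ioi s) s) : Measurable w := by
  apply measurable_of_tendsto_metrizable
    (f := fun n s => w (((⌊s * ((n : ℝ) + 1)⌋ : ℝ) + 1) / ((n : ℝ) + 1)))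
    (fun n => meas_comp_floor w n)
  rw [tendsto_pi_nhds]
  intro s
  have hpos : ∀ n : ℕ, (0 : ℝ) < n + 1 := fun n => by positivity
  have hgt : ∀ n : ℕ, s < ((⌊s * ((n : ℝ) + 1)⌋ : ℝ) + 1) / ((n : ℝ) + 1) := by
    intro n
    rw [lt_div_iff₀ (hpos n)]
    exact Int.lt_floor_add_one _
  have hle : ∀ n : ℕ, ((⌊s * ((n : ℝ) + 1)⌋ : ℝ) + 1) / ((n : ℝ) + 1) ≤ s + 1 / (n + 1) := by
    intro n
    rw [div_le_iff₀ (hpos n)]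
    have h := Int.floor_le (s * ((n : ℝ) + 1))
    have h2 : (s + 1 / ((n : ℝ) + 1)) * ((n : ℝ) + 1) = s * ((n : ℝ) + 1) + 1 := by
      field_simp
    rw [h2]
    linarith
  have htend : Tendsto (fun n : ℕ => ((⌊s * ((n : ℝ) + 1)⌋ : ℝ) + 1) / ((n : ℝ) + 1))
      atTop (nhds s) := by
    apply tendsto_of_tendsto_of_tendsto_of_le_of_le (g := fun _ : ℕ => s)
      (h := fun n : ℕ => s + 1 / (n + 1)) tendsto_const_nhds ?_ (fun n => (hgt n).le) hle
    have : Tendsto (fun n : ℕ => 1 / ((n : ℝ) + 1)) atTop (nhds 0) :=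
      tendsto_one_div_add_atTop_nhds_zero_nat
    simpa using tendsto_const_nhds.add this
  have htend' : Tendsto (fun n : ℕ => ((⌊s * ((n : ℝ) + 1)⌋ : ℝ) + 1) / ((n : ℝ) + 1))
      atTop (nhdsWithin s (Set.Ioi s)) :=
    tendsto_nhdsWithin_of_tendsto_nhds_of_eventually_within _ htend (Eventually.of_forall hgt)
  exact (hw s).tendsto.comp htend'

/-- In the jump-time perturbed setting, `T ↦ Y₁(T)` is Lipschitz on `(0,1]`,
with a Lipschitz constant `C` depending only on the bounds `Ma` on `‖a‖_∞`
and `Md` on `‖a'‖_∞`. Here, for each `T > 0`, `Y · (T) = Y T ·` is the unique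
continuous solution of `Y_t(T) = x + ∫₀ᵗ a (Y_s(T) + z̄_s + Δ·1_{[T,∞)}(s)) ds`,
and `G T = Y₁(T)`. -/
theorem jump_time_map_lipschitz (Ma Md : ℝ) :
    ∃ C : ℝ,
      ∀ (a zbar : ℝ → ℝ) (Δ x : ℝ) (Y : ℝ → ℝ → ℝ),
        ContDiff ℝ 1 a →
        (∀ y : ℝ, |a y| ≤ Ma) →
        (∀ y : ℝ, |deriv a y| ≤ Md) →
        CadlagOn zbar →
        (∀ T : ℝ, 0 < T →
          ContinuousOn (Y T) (Set.Ici 0) ∧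
          ∀ t : ℝ, 0 ≤ t →
            Y T t = x + ∫ s in (0:ℝ)..t,
              a (Y T s + zbar s + Set.indicator (Set.Ici T) (fun _ => Δ) s)) →
        ∀ T ∈ Set.Ioc (0:ℝ) 1, ∀ T' ∈ Set.Ioc (0:ℝ) 1,
          |Y T 1 - Y T' 1| ≤ C * |T - T'| := by
  set K := |Md| + 1 with hKdef
  refine ⟨2 * |Ma| * Real.exp K, ?_⟩
  intro a zbar Δ x Y hca hMa hMd hz hY T hT T' hT'
  obtain ⟨hT0, hT1⟩ := hT
  obtain ⟨hT'0, hT'1⟩ := hT'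
  have hMa0 : 0 ≤ Ma := le_trans (abs_nonneg _) (hMa 0)
  have hK0 : 0 < K := by positivity
  -- Lipschitz bound for a
  have hlip : ∀ p q : ℝ, |a p - a q| ≤ K * |p - q| := by
    intro p q
    have := Convex.norm_image_sub_le_of_norm_deriv_le
      (f := a) (s := Set.univ) (C := K)
      (fun y _ => (hca.differentiable one_ne_zero).differentiableAt)
      (fun y _ => le_trans (hMd y) (le_trans (le_abs_self Md) (by simp [hKdef])))
      convex_univ (mem_univ q) (mem_univ p)
    simpa [Real.norm_eq_abs] using this
  -- right-continuous extension of zbar and measurability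
  set w : ℝ → ℝ := fun s => zbar (max s 0) with hwdef
  have hm : Continuous (fun s : ℝ => max s 0) := continuous_id.max continuous_const
  have hwr : ∀ s : ℝ, ContinuousWithinAt w (Set.Ioi s) s := by
    intro s
    have hz1 := hz.1 (max s 0) (le_max_right _ _)
    exact ContinuousWithinAt.comp (f := fun y : ℝ => max y 0) (g := zbar)
      (t := Set.Ici (max s 0)) hz1 hm.continuousWithinAt
      (fun y hy => show max s 0 ≤ max y 0 from max_le_max (le_of_lt hy) le_rfl)
  have hwmeas : Measurable w := measurable_of_rightCont_s3 hwr
  -- continuous extensions of Y T, Y T'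
  have hYc : ∀ S : ℝ, 0 < S → Continuous (fun s : ℝ => Y S (max s 0)) := fun S hS =>
    (hY S hS).1.comp_continuous hm (fun s => le_max_right s 0)
  -- the modified integrand
  set F : ℝ → ℝ → ℝ := fun S s =>
    a (Y S (max s 0) + w s + Set.indicator (Set.Ici S) (fun _ => Δ) s) with hFdef
  have hFmeas : ∀ S : ℝ, 0 < S → Measurable (F S) := by
    intro S hS
    exact hca.continuous.measurable.comp
      ((((hYc S hS).measurable.add hwmeas)).add
        (measurable_const.indicator measurableSet_Ici))
  have hFbd : ∀ S s : ℝ, |F S s| ≤ Ma := fun S s => hMa _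
  have hFint : ∀ S : ℝ, 0 < S → ∀ t1 t2 : ℝ, IntervalIntegrable (F S) volume t1 t2 := by
    intro S hS t1 t2
    refine (intervalIntegrable_const (c := Ma)).mono_fun
      ((hFmeas S hS).aestronglyMeasurable) ?_
    refine Eventually.of_forall (fun s => ?_)
    simp only [Real.norm_eq_abs]
    exact le_trans (hFbd S s) (le_abs_self Ma)
  -- the integral equation in terms of F
  have hYF : ∀ S : ℝ, 0 < S → ∀ t : ℝ, 0 ≤ t → Y S t = x + ∫ s in (0:ℝ)..t, F S s := by
    intro S hS t ht
    rw [(hY S hS).2 t ht]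
    congr 1
    apply intervalIntegral.integral_congr
    intro s hs
    rw [Set.uIcc_of_le ht] at hs
    have h1 : max s 0 = s := max_eq_left hs.1
    simp only [hFdef, hwdef, h1]
  -- the difference function
  set u : ℝ → ℝ := fun s => |Y T (max s 0) - Y T' (max s 0)| with hudef
  have hu_cont : Continuous u := ((hYc T hT0).sub (hYc T' hT'0)).abs
  have hu_nonneg : ∀ s, 0 ≤ u s := fun s => abs_nonneg _
  set ε := 2 * Ma * |T - T'| with hεdef
  have hε0 : 0 ≤ ε := by
    apply mul_nonneg (by linarith) (abs_nonneg _)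
  set b := min T T' with hbdef
  set c := max T T' with hcdef
  -- key integral inequality
  have key : ∀ t ∈ Set.Icc (0:ℝ) 1, u t ≤ ε + K * ∫ s in (0:ℝ)..t, u s := by
    rintro t ⟨ht0, ht1⟩
    have hmax : max t 0 = t := max_eq_left ht0
    have e1 : Y T t - Y T' t = ∫ s in (0:ℝ)..t, (F T s - F T' s) := by
      rw [hYF T hT0 t ht0, hYF T' hT'0 t ht0,
        intervalIntegral.integral_sub (hFint T hT0 0 t) (hFint T' hT'0 0 t)]
      ring
    set h : ℝ → ℝ := fun s => K * u s +
      Set.indicator (Set.Ico b c) (fun _ => 2 * Ma) s with hhdef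
    have hind_int : IntervalIntegrable
        (fun s => Set.indicator (Set.Ico b c) (fun _ => 2 * Ma) s) volume 0 t := by
      refine (intervalIntegrable_const (c := 2 * Ma)).mono_fun
        ((measurable_const.indicator measurableSet_Ico).aestronglyMeasurable) ?_
      refine Eventually.of_forall (fun s => ?_)
      simp only [Real.norm_eq_abs]
      by_cases hs : s ∈ Set.Ico b c
      · rw [Set.indicator_of_mem hs]
      · rw [Set.indicator_of_notMem hs, abs_zero]; exact abs_nonneg _
    have hh_int : IntervalIntegrable h volume 0 t :=
      ((continuous_const.mul hu_cont).intervalIntegrable 0 t).add hind_int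
    have hpt : ∀ s ∈ Set.Icc (0:ℝ) t, |F T s - F T' s| ≤ h s := by
      intro s hs
      set P := Y T (max s 0) + w s with hP
      set Q := Y T' (max s 0) + w s with hQ
      set dT := Set.indicator (Set.Ici T) (fun _ => Δ) s with hdT
      set dT' := Set.indicator (Set.Ici T') (fun _ => Δ) s with hdT'
      have htri : |F T s - F T' s| ≤ |a (P + dT) - a (Q + dT)| + |a (Q + dT) - a (Q + dT')| := by
        simp only [hFdef]
        exact abs_sub_le _ _ _
      have h1 : |a (P + dT) - a (Q + dT)| ≤ K * u s := by
        have := hlip (P + dT) (Q + dT)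
        simpa [hP, hQ, hudef] using this
      have h2 : |a (Q + dT) - a (Q + dT')| ≤
          Set.indicator (Set.Ico b c) (fun _ => 2 * Ma) s := by
        by_cases hsm : s ∈ Set.Ico b c
        · rw [Set.indicator_of_mem hsm]
          calc |a (Q + dT) - a (Q + dT')| ≤ |a (Q + dT)| + |a (Q + dT')| := abs_sub _ _
            _ ≤ Ma + Ma := add_le_add (hMa _) (hMa _)
            _ = 2 * Ma := by ring
        · have heq : dT = dT' := by
            rcases not_and_or.1 hsm with hlt | hge
            · push_neg at hlt
              have hsT : s ∉ Set.Ici T := fun hmem =>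
                absurd (le_trans (min_le_left T T') hmem) (not_le.2 hlt)
              have hsT' : s ∉ Set.Ici T' := fun hmem =>
                absurd (le_trans (min_le_right T T') hmem) (not_le.2 hlt)
              rw [hdT, hdT', Set.indicator_of_notMem hsT, Set.indicator_of_notMem hsT']
            · push_neg at hge
              have hsT : s ∈ Set.Ici T := le_trans (le_max_left T T') hge
              have hsT' : s ∈ Set.Ici T' := le_trans (le_max_right T T') hge
              rw [hdT, hdT', Set.indicator_of_mem hsT, Set.indicator_of_mem hsT']
          rw [heq, sub_self, abs_zero, Set.indicator_of_notMem hsm]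
      calc |F T s - F T' s| ≤ |a (P + dT) - a (Q + dT)| + |a (Q + dT) - a (Q + dT')| := htri
        _ ≤ K * u s + Set.indicator (Set.Ico b c) (fun _ => 2 * Ma) s := add_le_add h1 h2
        _ = h s := rfl
    have e2 : |Y T t - Y T' t| ≤ ∫ s in (0:ℝ)..t, h s := by
      rw [e1]
      calc |∫ s in (0:ℝ)..t, (F T s - F T' s)| ≤ ∫ s in (0:ℝ)..t, |F T s - F T' s| :=
            intervalIntegral.abs_integral_le_integral_abs ht0
        _ ≤ ∫ s in (0:ℝ)..t, h s := by
            apply intervalIntegral.integral_mono_on ht0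
              (((hFint T hT0 0 t).sub (hFint T' hT'0 0 t)).abs) hh_int hpt
    have e3 : (∫ s in (0:ℝ)..t, h s) ≤ K * (∫ s in (0:ℝ)..t, u s) + ε := by
      rw [hhdef]
      rw [intervalIntegral.integral_add (f := fun s => K * u s)
          ((continuous_const.mul hu_cont).intervalIntegrable 0 t)
        hind_int, intervalIntegral.integral_const_mul]
      have hind_le : (∫ s in (0:ℝ)..t,
          Set.indicator (Set.Ico b c) (fun _ => 2 * Ma) s) ≤ ε := by
        rw [intervalIntegral.integral_of_le ht0,
          MeasureTheory.setIntegral_indicator measurableSet_Ico,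
          MeasureTheory.setIntegral_const]
        have hvol : (volume (Set.Ioc 0 t ∩ Set.Ico b c)).toReal ≤ |T - T'| := by
          have h1 : volume (Set.Ioc 0 t ∩ Set.Ico b c) ≤ volume (Set.Ico b c) :=
            measure_mono inter_subset_right
          rw [Real.volume_Ico] at h1
          have h2 := ENNReal.toReal_mono ENNReal.ofReal_ne_top h1
          rw [ENNReal.toReal_ofReal (sub_nonneg.2 (min_le_max))] at h2
          calc (volume (Set.Ioc 0 t ∩ Set.Ico b c)).toReal ≤ c - b := h2
            _ = |T - T'| := (max_sub_min_eq_abs T T').trans (abs_sub_comm T' T)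
        rw [smul_eq_mul, hεdef, measureReal_def]
        nlinarith [ENNReal.toReal_nonneg (a := volume (Set.Ioc 0 t ∩ Set.Ico b c)),
          abs_nonneg (T - T')]
      linarith
    have : u t = |Y T t - Y T' t| := by rw [hudef]; simp [hmax]
    rw [this]
    linarith [e2, e3]
  -- Grönwall
  set V : ℝ → ℝ := fun t => ∫ s in (0:ℝ)..t, u s with hVdef
  have hV0 : V 0 = 0 := intervalIntegral.integral_same
  have hVd : ∀ t : ℝ, HasDerivAt V (u t) t := by
    intro t
    exact intervalIntegral.integral_hasDerivAt_right (hu_cont.intervalIntegrable 0 t)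
      (hu_cont.stronglyMeasurableAtFilter volume (nhds t)) hu_cont.continuousAt
  have hVnn : ∀ t, 0 ≤ t → 0 ≤ V t := fun t ht =>
    intervalIntegral.integral_nonneg ht (fun s _ => hu_nonneg s)
  have hgr := norm_le_gronwallBound_of_norm_deriv_right_le (f := V) (f' := u)
    (δ := 0) (K := K) (ε := ε) (a := 0) (b := 1)
    (fun t _ => (hVd t).continuousAt.continuousWithinAt)
    (fun t _ => (hVd t).hasDerivWithinAt)
    (by rw [hV0]; simp)
    (fun t ht => by
      rw [Real.norm_eq_abs, Real.norm_eq_abs, abs_of_nonneg (hu_nonneg t),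
        abs_of_nonneg (hVnn t ht.1)]
      have := key t ⟨ht.1, ht.2.le⟩
      linarith)
  have hV1 := hgr 1 (right_mem_Icc.2 zero_le_one)
  rw [Real.norm_eq_abs, abs_of_nonneg (hVnn 1 zero_le_one), gronwallBound_of_K_ne_0 hK0.ne']
    at hV1
  simp only [zero_mul, zero_add, sub_zero, mul_one] at hV1
  have hu1 := key 1 (right_mem_Icc.2 zero_le_one)
  have hfinal : u 1 ≤ ε * Real.exp K := by
    have hVle : K * V 1 ≤ ε * (Real.exp K - 1) := by
      have := mul_le_mul_of_nonneg_left hV1 hK0.le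
      calc K * V 1 ≤ K * (ε / K * (Real.exp K - 1)) := this
        _ = ε * (Real.exp K - 1) := by field_simp
    linarith [hu1]
  have hu1' : |Y T 1 - Y T' 1| = u 1 := by rw [hudef]; norm_num
  rw [hu1']
  calc u 1 ≤ ε * Real.exp K := hfinal
    _ = 2 * Ma * Real.exp K * |T - T'| := by rw [hεdef]; ring
    _ ≤ 2 * |Ma| * Real.exp K * |T - T'| := by
        have h1 : 0 ≤ (|Ma| - Ma) * (Real.exp K * |T - T'|) :=
          mul_nonneg (by linarith [le_abs_self Ma])
            (mul_nonneg (Real.exp_pos K).le (abs_nonneg _))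
        nlinarith [h1]
end

section
/- Let α < β be real numbers and let g : [α,β] → ℝ be Lipschitz. Suppose there is a constant c > 0 such that for Lebesgue-almost every t ∈ (α,β), g is differentiable at t with |g'(t)| ≥ c. Then for every Borel set A ⊆ ℝ of Lebesgue measure zero, the set {t ∈ (α,β) : g(t) ∈ A} has Lebesgue measure zero. -/
open MeasureTheory Filter Set
open scoped NNReal ENNReal

/-- Key lemma: if `g` has (full) derivative with `|g'| ≥ c > 0` at every point of `s`,
and `g '' s` is null, then `s` is null. -/
theorem null_of_image_null_aux (g : ℝ → ℝ) (c : ℝ) (hc : 0 < c) (s : Set ℝ)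
    (hs : ∀ x ∈ s, DifferentiableAt ℝ g x ∧ c ≤ |deriv g x|)
    (h0 : volume (g '' s) = 0) : volume s = 0 := by
  rcases s.eq_empty_or_nonempty with rfl | hne
  · simp
  set m : ℝ≥0 := (c / 2).toNNReal with hm
  have hm0 : (0 : ℝ≥0) < m := by
    simp [hm, Real.toNNReal_pos]; linarith
  have hmc : (m : ℝ≥0∞) < ENNReal.ofReal c := by
    rw [show ((m : ℝ≥0) : ℝ≥0∞) = ENNReal.ofReal (c / 2) by
      simp [hm, ENNReal.ofReal]]
    exact ENNReal.ofReal_lt_ofReal_iff hc |>.2 (by linarith)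
  -- choose a good approximation scale for each linear map
  have key : ∀ B : ℝ →L[ℝ] ℝ, ∃ δ : ℝ≥0, δ ≠ 0 ∧
      (ENNReal.ofReal c ≤ ENNReal.ofReal |B.det| →
        ∀ (u : Set ℝ) (f : ℝ → ℝ), ApproximatesLinearOn f B u δ →
          (m : ℝ≥0∞) * volume u ≤ volume (f '' u)) := by
    intro B
    by_cases hB : ENNReal.ofReal c ≤ ENNReal.ofReal |B.det|
    · have := MeasureTheory.mul_le_addHaar_image_of_lt_det (μ := volume) B
        (m := m) (lt_of_lt_of_le hmc hB)
      obtain ⟨δ, hδ, hδpos⟩ := (this.and self_mem_nhdsWithin).exists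
      exact ⟨δ, ne_of_gt hδpos, fun _ => hδ⟩
    · exact ⟨1, one_ne_zero, fun h => absurd h hB⟩
  choose r hr0 hr using key
  -- the derivative as a continuous linear map
  set f' : ℝ → ℝ →L[ℝ] ℝ := fun x => (1 : ℝ →L[ℝ] ℝ).smulRight (deriv g x) with hf'def
  have hf' : ∀ x ∈ s, HasFDerivWithinAt g (f' x) s x := fun x hx =>
    ((hs x hx).1.hasDerivAt.hasFDerivAt).hasFDerivWithinAt
  obtain ⟨t, B, _tdisj, _tmeas, tcov, tapprox, hB⟩ :=
    exists_partition_approximatesLinearOn_of_hasFDerivWithinAt g s f' hf' r hr0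
  have hBdet : ∀ n, ENNReal.ofReal c ≤ ENNReal.ofReal |(B n).det| := by
    intro n
    obtain ⟨y, hy, hBy⟩ := hB hne n
    rw [hBy]
    simp only [hf'def, ContinuousLinearMap.smulRight_one_eq_toSpanSingleton, ContinuousLinearMap.det_toSpanSingleton]
    exact ENNReal.ofReal_le_ofReal (hs y hy).2
  have hpiece : ∀ n, volume (s ∩ t n) = 0 := by
    intro n
    have h1 : (m : ℝ≥0∞) * volume (s ∩ t n) ≤ volume (g '' (s ∩ t n)) :=
      hr (B n) (hBdet n) _ g (tapprox n)
    have h2 : volume (g '' (s ∩ t n)) = 0 :=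
      measure_mono_null (image_mono inter_subset_left) h0
    rw [h2, nonpos_iff_eq_zero, mul_eq_zero] at h1
    rcases h1 with h1 | h1
    · exact absurd h1 (by simpa using hm0.ne')
    · exact h1
  have : s ⊆ ⋃ n, s ∩ t n := by
    intro x hx
    rcases mem_iUnion.1 (tcov hx) with ⟨n, hn⟩
    exact mem_iUnion.2 ⟨n, hx, hn⟩
  refine le_antisymm ?_ zero_le
  calc volume s ≤ volume (⋃ n, s ∩ t n) := measure_mono this
    _ ≤ ∑' n, volume (s ∩ t n) := measure_iUnion_le _
    _ = 0 := by simp [hpiece]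

/-- If `g` is Lipschitz on `[α,β]` and, for a.e. `t ∈ (α,β)`, `g` is
differentiable at `t` with `|g'(t)| ≥ c > 0`, then the preimage under `g`
of any Lebesgue-null Borel set is Lebesgue-null in `(α,β)`. -/
theorem preimage_null_of_lipschitz_deriv_bounded_below
    (α β : ℝ) (hαβ : α < β) (g : ℝ → ℝ)
    (hLip : ∃ K : NNReal, LipschitzOnWith K g (Set.Icc α β))
    (c : ℝ) (hc : 0 < c)
    (hderiv : ∀ᵐ t ∂(volume.restrict (Set.Ioo α β)),
      DifferentiableAt ℝ g t ∧ c ≤ |deriv g t|)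
    (A : Set ℝ) (hA : MeasurableSet A) (hA0 : volume A = 0) :
    volume {t ∈ Set.Ioo α β | g t ∈ A} = 0 := by
  set G : Set ℝ := {t | DifferentiableAt ℝ g t ∧ c ≤ |deriv g t|} with hG
  set S : Set ℝ := {t ∈ Set.Ioo α β | g t ∈ A} with hS
  have hbad : volume (Gᶜ ∩ Set.Ioo α β) = 0 := by
    have : volume.restrict (Set.Ioo α β) Gᶜ = 0 := hderiv
    rwa [Measure.restrict_apply' measurableSet_Ioo] at this
  have hgood : volume (S ∩ G) = 0 := by
    apply null_of_image_null_aux g c hc _ (fun x hx => hx.2)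
    apply measure_mono_null _ hA0
    rintro _ ⟨x, hx, rfl⟩
    exact hx.1.2
  have hsub : S ⊆ (S ∩ G) ∪ (Gᶜ ∩ Set.Ioo α β) := by
    intro x hx
    by_cases hxG : x ∈ G
    · exact Or.inl ⟨hx, hxG⟩
    · exact Or.inr ⟨hxG, hx.1⟩
  refine le_antisymm ?_ zero_le
  calc volume S ≤ volume ((S ∩ G) ∪ (Gᶜ ∩ Set.Ioo α β)) := measure_mono hsub
    _ ≤ volume (S ∩ G) + volume (Gᶜ ∩ Set.Ioo α β) := measure_union_le _ _
    _ = 0 := by rw [hgood, hbad, add_zero]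
end
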